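/- Faithfulness of the aggregate rewriting: let Π be a program, A an aggregate of the form sum[w_1:l_1,...,w_n:l_n] ⊙ b with ⊙ ∈ {>,≠}, and V a set of atoms containing rec(Π,A) (the atoms in the strongly connected component of A in the positive dependency graph of Π). Then Π and rew(Π,A,V) are equivalent with respect to At(Π): they have equally many stable models, and the restrictions of their stable models to At(Π) coincide; in fact each stable model I of Π corresponds to the unique stable model ext(I,I) of rew(Π,A,V). -/

import Mathlib

noncomputable section
attribute [local instance] Classical.propDecidable

/-- Propositional literals: atoms under possibly nested negation as failure. -/
inductive Lit (V : Type) where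
  | pos : V → Lit V
  | neg : Lit V → Lit V

/-- Comparison operators of (normalized) sum aggregates. -/
inductive AggOp where
  | gt | ne

/-- A sum aggregate `sum[w₁:l₁,...,wₙ:lₙ] ⊙ b` with `⊙ ∈ {>, ≠}`. -/
structure Agg (V : Type) where
  n : ℕ
  w : Fin n → ℤ
  l : Fin n → Lit V
  op : AggOp
  b : ℤ

/-- Body literals: propositional literals or aggregates. -/
inductive BLit (V : Type) where
  | lit : Lit V → BLit V
  | agg : Agg V → BLit V

/-- A rule `p₁ ∨ ... ∨ pₘ ← l₁ ∧ ... ∧ lₙ`; the head collects the head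
    atoms different from ⊥ (so constraints have empty head). -/
structure Rule (V : Type) where
  head : Finset V
  body : List (BLit V)

abbrev Program (V : Type) := Set (Rule V)

variable {V : Type}

def satLit (I : Set V) : Lit V → Prop
  | .pos p => p ∈ I
  | .neg l => ¬ satLit I l

/-- Satisfaction of the reduct `F(I,l)` by `J`: negative literals are fixed
    by `I`, positive ones are evaluated in `J`. -/
def satLitRed (I J : Set V) : Lit V → Prop
  | .pos p => p ∈ J
  | .neg l => ¬ satLit I l

def aggSum (A : Agg V) (sat : Lit V → Prop) : ℤ :=
  ∑ i ∈ Finset.univ.filter (fun i => sat (A.l i)), A.w i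

def satAggWith (A : Agg V) (sat : Lit V → Prop) : Prop :=
  match A.op with
  | .gt => aggSum A sat > A.b
  | .ne => aggSum A sat ≠ A.b

def satAgg (I : Set V) (A : Agg V) : Prop := satAggWith A (satLit I)

/-- `J ⊨ F(I,A)` for an aggregate `A`. -/
def satAggRed (I J : Set V) (A : Agg V) : Prop := satAggWith A (satLitRed I J)

def satB (I : Set V) : BLit V → Prop
  | .lit l => satLit I l
  | .agg A => satAgg I A

def satBRed (I J : Set V) : BLit V → Prop
  | .lit l => satLitRed I J l
  | .agg A => satAggRed I J A

def satBody (I : Set V) (r : Rule V) : Prop := ∀ bl ∈ r.body, satB I bl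

def satBodyRed (I J : Set V) (r : Rule V) : Prop := ∀ bl ∈ r.body, satBRed I J bl

def satRule (I : Set V) (r : Rule V) : Prop := satBody I r → ∃ p ∈ r.head, p ∈ I

/-- `I ⊨ Π`. -/
def satProg (I : Set V) (P : Program V) : Prop := ∀ r ∈ P, satRule I r

/-- `J ⊨ F(I,Π)`: the reduct keeps the rules whose bodies are true in `I`,
    fixing negative literals according to `I`. -/
def satRedProg (I J : Set V) (P : Program V) : Prop :=
  ∀ r ∈ P, satBody I r → satBodyRed I J r → ∃ p ∈ r.head, p ∈ J

/-- `I` is a stable model of `P`. -/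
def stable (P : Program V) (I : Set V) : Prop :=
  satProg I P ∧ ∀ J, J ⊂ I → ¬ satRedProg I J P

/-- The aggregates occurring in `P`. -/
def AgOf (P : Program V) : Set (Agg V) := {A | ∃ r ∈ P, BLit.agg A ∈ r.body}

/-- `Σ(l,A)`: the total weight of the literal `l` in `A`. -/
def wtL (A : Agg V) (l : Lit V) : ℤ :=
  ∑ i ∈ Finset.univ.filter (fun i => A.l i = l), A.w i

/-- The total weight of the atom `p` in `A`. -/
def wt (A : Agg V) (p : V) : ℤ := wtL A (Lit.pos p)

def atomsLit : Lit V → Set V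
  | .pos p => {p}
  | .neg l => atomsLit l

def atomsAgg (A : Agg V) : Set V := ⋃ i, atomsLit (A.l i)

def atomsB : BLit V → Set V
  | .lit l => atomsLit l
  | .agg A => atomsAgg A

/-- `At(P)`: the atoms occurring in `P`. -/
def atomsProg (P : Program V) : Set V :=
  {p | ∃ r ∈ P, p ∈ r.head ∨ ∃ bl ∈ r.body, p ∈ atomsB bl}

/-- Vertices of the positive dependency graph: atoms and aggregates. -/
abbrev Vtx (V : Type) := V ⊕ Agg V

/-- Arcs of the positive dependency graph `G_P`. -/
def arc (P : Program V) (u v : Vtx V) : Prop :=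
  (∃ r ∈ P, (∃ a, u = Sum.inl a ∧ a ∈ r.head) ∧
     ((∃ b, v = Sum.inl b ∧ BLit.lit (Lit.pos b) ∈ r.body) ∨
      (∃ A, v = Sum.inr A ∧ BLit.agg A ∈ r.body))) ∨
  (∃ A p, u = Sum.inr A ∧ v = Sum.inl p ∧ A ∈ AgOf P ∧
     ((A.op = AggOp.gt ∧ 0 < wt A p) ∨ (A.op = AggOp.ne ∧ wt A p ≠ 0)))

/-- Mutual reachability in `G_P`. -/
def mreach (P : Program V) (u v : Vtx V) : Prop :=
  Relation.ReflTransGen (arc P) u v ∧ Relation.ReflTransGen (arc P) v u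

/-- Vertices occurring in `P`. -/
def vertices (P : Program V) : Set (Vtx V) :=
  (Sum.inl '' atomsProg P) ∪ (Sum.inr '' AgOf P)

/-- Strongly connected components of `G_P` (components of `P`). -/
def isComponent (P : Program V) (C : Set (Vtx V)) : Prop :=
  ∃ u ∈ vertices P, C = {v ∈ vertices P | mreach P u v}

/-- `rec(Π,A)`: the atoms in the strongly connected component of `A` in the
    positive dependency graph of `Π` (empty when `A` does not occur in `Π`). -/
def recSet (P : Program V) (A : Agg V) : Set V :=
  {p | A ∈ AgOf P ∧ mreach P (Sum.inr A) (Sum.inl p)}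

/-- The distinct literals of `A` with nonzero total weight. -/
def litsNZ (A : Agg V) : Finset (Lit V) :=
  (Finset.univ.image A.l).filter (fun l => wtL A l ≠ 0)

/-- The transformation of an aggregated literal in rule (4):
    literals with positive total weight are kept; an atom `p ∈ V` with
    negative total weight becomes the fresh atom `p^F`; any other literal `l`
    with negative total weight becomes `∼l`. -/
def tLit (pF : V → V) (Vs : Set V) (A : Agg V) (l : Lit V) : Lit V :=
  if 0 < wtL A l then l
  else
    match l with
    | .pos p => if p ∈ Vs then .pos (pF p) else .neg (.pos p)
    | .neg m => .neg (.neg m)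

/-- The monotone aggregate in the body of rule (4):
    `sum(wlit⁺(A) ∪ [-w:p^F | (w:p)∈wlit⁻(A), p∈V] ∪ [-w:∼l | (w:l)∈wlit⁻(A), l∉V])
       > b - Σ_{(w:l)∈wlit⁻(A)} w`. -/
def rewAgg (pF : V → V) (Vs : Set V) (A : Agg V) : Agg V where
  n := (litsNZ A).card
  w := fun i => |wtL A ((litsNZ A).equivFin.symm i : Lit V)|
  l := fun i => tLit pF Vs A ((litsNZ A).equivFin.symm i : Lit V)
  op := AggOp.gt
  b := A.b - ∑ l ∈ (litsNZ A).filter (fun l => wtL A l < 0), wtL A l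

/-- `pos(A,V)` for an aggregate with comparison `>`:
    rule (4) together with rules (5)–(7) for every `p ∈ V` with negative
    total weight in `A`. -/
def posGt (aux : V) (pF : V → V) (Vs : Set V) (A : Agg V) : Program V :=
  {r | r = ⟨{aux}, [BLit.agg (rewAgg pF Vs A)]⟩ ∨
       ∃ p, p ∈ Vs ∧ wtL A (Lit.pos p) < 0 ∧
         (r = ⟨{pF p}, [BLit.lit (.neg (.pos p))]⟩ ∨
          r = ⟨{pF p}, [BLit.lit (.pos aux)]⟩ ∨
          r = ⟨{p, pF p}, [BLit.lit (.neg (.neg (.pos aux)))]⟩)}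

/-- `A_<`: the aggregate `sum[-w₁:l₁,...,-wₙ:lₙ] > -b`. -/
def negA (A : Agg V) : Agg V := ⟨A.n, fun i => -(A.w i), A.l, AggOp.gt, -A.b⟩

/-- `A_>`: the aggregate `sum[w₁:l₁,...,wₙ:lₙ] > b`. -/
def gtA (A : Agg V) : Agg V := ⟨A.n, A.w, A.l, AggOp.gt, A.b⟩

/-- `pos(A,V)`: for `⊙ = >` as in `posGt`; for `⊙ = ≠`,
    `pos(A_>,V) ∪ pos(A_<,V)`, both sharing the same fresh atom `aux`. -/
def posProg (aux : V) (pF : V → V) (Vs : Set V) (A : Agg V) : Program V :=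
  match A.op with
  | AggOp.gt => posGt aux pF Vs A
  | AggOp.ne => posGt aux pF Vs (gtA A) ∪ posGt aux pF Vs (negA A)

/-- Replace any occurrence of `A` in a body literal by the fresh atom `aux`. -/
def replB (aux : V) (A : Agg V) : BLit V → BLit V
  | .agg A' => if A' = A then .lit (.pos aux) else .agg A'
  | .lit l => .lit l

def replRule (aux : V) (A : Agg V) (r : Rule V) : Rule V :=
  ⟨r.head, r.body.map (replB aux A)⟩

/-- `rew(Π,A,V)`: the union of `pos(A,V)` and `Π` with every occurrence of
    `A` replaced by `aux`. -/
def rewProg (aux : V) (pF : V → V) (P : Program V) (A : Agg V) (Vs : Set V) :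
    Program V :=
  posProg aux pF Vs A ∪ (replRule aux A '' P)

/-- `At^F(A,V)`: the atoms `p` whose fresh copy `p^F` is introduced in
    `pos(A,V)`, i.e. such that `(p^F ← aux) ∈ pos(A,V)`. -/
def AtF (aux : V) (pF : V → V) (Vs : Set V) (A : Agg V) : Set V :=
  {p | (⟨{pF p}, [BLit.lit (.pos aux)]⟩ : Rule V) ∈ posProg aux pF Vs A}

/-- The extension `ext(J,I)` of `J ⊆ I` relative to `I`. -/
def extSet (aux : V) (pF : V → V) (Vs : Set V) (A : Agg V) (J I : Set V) :
    Set V :=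
  if ¬ satAgg I A then J ∪ pF '' {p ∈ AtF aux pF Vs A | p ∉ I}
  else if ¬ satAggRed I J A then J ∪ pF '' {p ∈ AtF aux pF Vs A | p ∉ J}
  else J ∪ {aux} ∪ pF '' AtF aux pF Vs A


/-!
The rewritten aggregate of rule (4) is `A` evaluated under a valuation in which a literal of
negative weight counts exactly when its replacement (`p^F`, `∼p` or `∼∼l`) is false, the bound
being shifted by the total negative weight. Comparing the two sums literal by literal shows that
`ext(J,I)` is a model of `F(ext(I,I), rew(Π,A,V))` whenever `J ⊆ I` is a model of `F(I,Π)`, and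
that every stable model `I'` of the rewriting is `ext(I,I)` for `I = I' \ ({aux} ∪ p^F-atoms)`;
hence `I` is stable for `Π`. Conversely, a countermodel of `F(ext(I,I), rew(Π,A,V))` may be
chosen so that the atoms it drops are mutually reachable in the dependency graph of the
rewriting; when `aux` is among them, the others lie in `rec(Π,A) ⊆ V`, and the restriction of the
countermodel to the atoms of `Π` is a countermodel of `F(I,Π)`.
-/
section Basics

lemma atomsLit_finite (l : Lit V) : (atomsLit l).Finite := by
  induction l with
  | pos p => exact Set.finite_singleton p
  | neg l ih => exact ih

lemma atomsAgg_finite (B : Agg V) : (atomsAgg B).Finite :=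
  Set.finite_iUnion fun _ => atomsLit_finite _

lemma atomsB_finite : ∀ bl : BLit V, (atomsB bl).Finite
  | .lit l => atomsLit_finite l
  | .agg B => atomsAgg_finite B

lemma atomsProg_finite {P : Program V} (hP : P.Finite) : (atomsProg P).Finite := by
  refine (hP.biUnion fun r _ => r.head.finite_toSet.union
    (r.body.finite_toSet.biUnion fun bl _ => atomsB_finite bl)).subset ?_
  rintro p ⟨r, hr, hp⟩
  refine Set.mem_biUnion hr ?_
  rcases hp with hp | ⟨bl, hbl, hp⟩
  · exact Or.inl hp
  · exact Or.inr (Set.mem_biUnion hbl hp)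

lemma mem_atomsProg_of_mem_head {P : Program V} {r : Rule V} (hr : r ∈ P) {q : V}
    (hq : q ∈ r.head) : q ∈ atomsProg P :=
  ⟨r, hr, Or.inl hq⟩

lemma mem_atomsProg_of_mem_body {P : Program V} {r : Rule V} (hr : r ∈ P) {bl : BLit V}
    (hbl : bl ∈ r.body) {q : V} (hq : q ∈ atomsB bl) : q ∈ atomsProg P :=
  ⟨r, hr, Or.inr ⟨bl, hbl, hq⟩⟩

lemma atomsAgg_subset_atomsProg {P : Program V} {B : Agg V} (hB : B ∈ AgOf P) :
    atomsAgg B ⊆ atomsProg P := by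
  obtain ⟨r, hr, hbl⟩ := hB
  exact fun q hq => mem_atomsProg_of_mem_body hr hbl hq

lemma satLit_congr {I K : Set V} {l : Lit V} (h : ∀ q ∈ atomsLit l, q ∈ I ↔ q ∈ K) :
    satLit I l ↔ satLit K l := by
  induction l with
  | pos p => exact h p rfl
  | neg l ih => exact not_congr (ih h)

lemma satLitRed_congr {I I' J J' : Set V} {l : Lit V}
    (hI : ∀ q ∈ atomsLit l, q ∈ I ↔ q ∈ I') (hJ : ∀ q ∈ atomsLit l, q ∈ J ↔ q ∈ J') :
    satLitRed I J l ↔ satLitRed I' J' l := by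
  cases l with
  | pos p => exact hJ p rfl
  | neg l => exact not_congr (satLit_congr hI)

lemma satLitRed_self (I : Set V) (l : Lit V) : satLitRed I I l ↔ satLit I l := by
  cases l <;> rfl

lemma aggSum_congr {B : Agg V} {σ τ : Lit V → Prop} (h : ∀ i, σ (B.l i) ↔ τ (B.l i)) :
    aggSum B σ = aggSum B τ :=
  Finset.sum_congr (Finset.filter_congr fun i _ => h i) fun _ _ => rfl

lemma satAggWith_congr {B : Agg V} {σ τ : Lit V → Prop} (h : ∀ i, σ (B.l i) ↔ τ (B.l i)) :
    satAggWith B σ ↔ satAggWith B τ := by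
  unfold satAggWith
  rw [aggSum_congr h]

lemma satAgg_congr {I K : Set V} {B : Agg V} (h : ∀ q ∈ atomsAgg B, q ∈ I ↔ q ∈ K) :
    satAgg I B ↔ satAgg K B :=
  satAggWith_congr fun i => satLit_congr fun q hq => h q (Set.mem_iUnion.2 ⟨i, hq⟩)

lemma satAggRed_congr {I I' J J' : Set V} {B : Agg V}
    (hI : ∀ q ∈ atomsAgg B, q ∈ I ↔ q ∈ I') (hJ : ∀ q ∈ atomsAgg B, q ∈ J ↔ q ∈ J') :
    satAggRed I J B ↔ satAggRed I' J' B :=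
  satAggWith_congr fun i => satLitRed_congr (fun q hq => hI q (Set.mem_iUnion.2 ⟨i, hq⟩))
    (fun q hq => hJ q (Set.mem_iUnion.2 ⟨i, hq⟩))

lemma satAggRed_self (I : Set V) (B : Agg V) : satAggRed I I B ↔ satAgg I B :=
  satAggWith_congr fun _ => satLitRed_self I _

lemma satB_congr {I K : Set V} {bl : BLit V} (h : ∀ q ∈ atomsB bl, q ∈ I ↔ q ∈ K) :
    satB I bl ↔ satB K bl := by
  cases bl with
  | lit l => exact satLit_congr h
  | agg B => exact satAgg_congr h

lemma satBRed_congr {I I' J J' : Set V} {bl : BLit V}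
    (hI : ∀ q ∈ atomsB bl, q ∈ I ↔ q ∈ I') (hJ : ∀ q ∈ atomsB bl, q ∈ J ↔ q ∈ J') :
    satBRed I J bl ↔ satBRed I' J' bl := by
  cases bl with
  | lit l => exact satLitRed_congr hI hJ
  | agg B => exact satAggRed_congr hI hJ

lemma satBRed_self (I : Set V) (bl : BLit V) : satBRed I I bl ↔ satB I bl := by
  cases bl with
  | lit l => exact satLitRed_self I l
  | agg B => exact satAggRed_self I B

lemma satBody_singleton {I : Set V} {h : Finset V} {bl : BLit V} :
    satBody I ⟨h, [bl]⟩ ↔ satB I bl := by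
  simp [satBody]

lemma satBodyRed_singleton {I J : Set V} {h : Finset V} {bl : BLit V} :
    satBodyRed I J ⟨h, [bl]⟩ ↔ satBRed I J bl := by
  simp [satBodyRed]

lemma satRedProg_self_iff {I : Set V} {P : Program V} : satRedProg I I P ↔ satProg I P :=
  forall₂_congr fun r _ => by
    have hbody : satBodyRed I I r ↔ satBody I r := forall₂_congr fun bl _ => satBRed_self I bl
    rw [hbody]
    exact ⟨fun h hb => h hb hb, fun h hb _ => h hb⟩

lemma satRedProg_union {I J : Set V} {P Q : Program V} :
    satRedProg I J (P ∪ Q) ↔ satRedProg I J P ∧ satRedProg I J Q := by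
  simp only [satRedProg, Set.mem_union, or_imp, forall_and]

lemma stable_subset_atomsProg {P : Program V} {I : Set V} (h : stable P I) :
    I ⊆ atomsProg P := by
  intro q hq
  by_contra hq'
  refine h.2 (I \ {q}) (Set.sdiff_singleton_ssubset.2 hq) fun r hr hb _ => ?_
  obtain ⟨p, hp, hpI⟩ := h.1 r hr hb
  exact ⟨p, hp, hpI, fun hpq => hq' (hpq ▸ mem_atomsProg_of_mem_head hr hp)⟩

end Basics

section Weights

lemma mem_litsNZ {B : Agg V} {l : Lit V} : l ∈ litsNZ B ↔ (∃ i, B.l i = l) ∧ wtL B l ≠ 0 := by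
  simp [litsNZ]

lemma atomsLit_subset_atomsAgg {B : Agg V} {l : Lit V} (hl : l ∈ litsNZ B) :
    atomsLit l ⊆ atomsAgg B := by
  obtain ⟨i, rfl⟩ := (mem_litsNZ.1 hl).1
  exact fun q hq => Set.mem_iUnion.2 ⟨i, hq⟩

lemma mem_atomsAgg_of_wtL_ne_zero {B : Agg V} {p : V} (h : wtL B (.pos p) ≠ 0) :
    p ∈ atomsAgg B := by
  obtain ⟨i, hi, _⟩ := Finset.exists_ne_zero_of_sum_ne_zero h
  exact Set.mem_iUnion.2 ⟨i, by rw [(Finset.mem_filter.1 hi).2]; rfl⟩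

lemma aggSum_eq_sum_litsNZ (B : Agg V) (σ : Lit V → Prop) :
    aggSum B σ = ∑ l ∈ litsNZ B, if σ l then wtL B l else 0 := by
  have hfib : ∀ l, (∑ i with B.l i = l, if σ (B.l i) then B.w i else 0)
      = if σ l then wtL B l else 0 := fun l => by
    rw [Finset.sum_congr rfl fun i hi => by rw [(Finset.mem_filter.1 hi).2]]
    split_ifs <;> simp [wtL]
  rw [aggSum, Finset.sum_filter, ← Finset.sum_fiberwise_of_maps_to (t := Finset.univ.image B.l)
    fun i _ => Finset.mem_image_of_mem _ (Finset.mem_univ i)]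
  simp only [hfib]
  exact (Finset.sum_filter_of_ne fun l _ h => by split_ifs at h <;> simp_all).symm

lemma aggSum_congr_litsNZ {B : Agg V} {σ τ : Lit V → Prop} (h : ∀ l ∈ litsNZ B, σ l ↔ τ l) :
    aggSum B σ = aggSum B τ := by
  simp only [aggSum_eq_sum_litsNZ]
  exact Finset.sum_congr rfl fun l hl => by rw [if_congr (h l hl) rfl rfl]

lemma aggSum_le_aggSum {B : Agg V} {σ τ : Lit V → Prop}
    (hpos : ∀ l ∈ litsNZ B, 0 < wtL B l → σ l → τ l)
    (hneg : ∀ l ∈ litsNZ B, wtL B l < 0 → τ l → σ l) :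
    aggSum B σ ≤ aggSum B τ := by
  simp only [aggSum_eq_sum_litsNZ]
  refine Finset.sum_le_sum fun l hl => ?_
  rcases lt_or_gt_of_ne (mem_litsNZ.1 hl).2 with hw | hw
  · by_cases hτ : τ l
    · simp [hτ, hneg l hl hw hτ]
    · split_ifs <;> omega
  · by_cases hσ : σ l
    · simp [hσ, hpos l hl hw hσ]
    · split_ifs <;> omega

end Weights

section Rewriting

variable {pF : V → V} {Vs : Set V}

lemma tLit_of_pos {B : Agg V} {l : Lit V} (h : 0 < wtL B l) : tLit pF Vs B l = l := by
  simp only [tLit, if_pos h]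

lemma tLit_pos_of_mem {B : Agg V} {p : V} (h : ¬ 0 < wtL B (.pos p)) (hp : p ∈ Vs) :
    tLit pF Vs B (.pos p) = .pos (pF p) := by
  simp [tLit, h, hp]

lemma tLit_pos_of_notMem {B : Agg V} {p : V} (h : ¬ 0 < wtL B (.pos p)) (hp : p ∉ Vs) :
    tLit pF Vs B (.pos p) = .neg (.pos p) := by
  simp [tLit, h, hp]

lemma tLit_neg {B : Agg V} {m : Lit V} (h : ¬ 0 < wtL B (.neg m)) :
    tLit pF Vs B (.neg m) = .neg (.neg m) := by
  simp only [tLit, if_neg h]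

lemma aggSum_rewAgg (B : Agg V) (σ : Lit V → Prop) :
    aggSum (rewAgg pF Vs B) σ = ∑ l ∈ litsNZ B, if σ (tLit pF Vs B l) then |wtL B l| else 0 :=
  calc aggSum (rewAgg pF Vs B) σ
      = ∑ i : Fin (litsNZ B).card, if σ (tLit pF Vs B ((litsNZ B).equivFin.symm i : Lit V))
          then |wtL B ((litsNZ B).equivFin.symm i : Lit V)| else 0 :=
        Finset.sum_filter _ _
    _ = ∑ l : litsNZ B, if σ (tLit pF Vs B l) then |wtL B l| else 0 :=
        Fintype.sum_equiv (litsNZ B).equivFin.symm _ _ fun _ => rfl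
    _ = _ := Finset.sum_coe_sort (litsNZ B) fun l => if σ (tLit pF Vs B l) then |wtL B l| else 0

def rewVal (pF : V → V) (Vs : Set V) (B : Agg V) (σ : Lit V → Prop) (l : Lit V) : Prop :=
  if 0 < wtL B l then σ l else ¬ σ (tLit pF Vs B l)

lemma satAggWith_rewAgg_iff (B : Agg V) (σ : Lit V → Prop) :
    satAggWith (rewAgg pF Vs B) σ ↔ B.b < aggSum B (rewVal pF Vs B σ) := by
  have hsum : aggSum (rewAgg pF Vs B) σ + ∑ l ∈ (litsNZ B).filter (fun l => wtL B l < 0), wtL B l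
      = aggSum B (rewVal pF Vs B σ) := by
    rw [aggSum_rewAgg, aggSum_eq_sum_litsNZ, Finset.sum_filter, ← Finset.sum_add_distrib]
    refine Finset.sum_congr rfl fun l hl => ?_
    rcases lt_or_gt_of_ne (mem_litsNZ.1 hl).2 with hw | hw
    · rw [rewVal, if_neg (lt_asymm hw), if_pos hw, abs_of_neg hw]
      split_ifs <;> simp_all
    · rw [rewVal, if_pos hw, if_neg (lt_asymm hw), tLit_of_pos hw, abs_of_pos hw, add_zero]
  change B.b - _ < aggSum (rewAgg pF Vs B) σ ↔ _
  omega

lemma wt_rewAgg_pos {B : Agg V} {x : V} (h : 0 < wt (rewAgg pF Vs B) x) :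
    0 < wtL B (.pos x) ∨ ∃ p, x = pF p := by
  have h' : wtL (rewAgg pF Vs B) (.pos x) ≠ 0 := h.ne'
  obtain ⟨i, hi, _⟩ := Finset.exists_ne_zero_of_sum_ne_zero h'
  have ht : tLit pF Vs B ((litsNZ B).equivFin.symm i : Lit V) = .pos x :=
    (Finset.mem_filter.1 hi).2
  generalize ((litsNZ B).equivFin.symm i : Lit V) = l at ht
  by_cases hw : 0 < wtL B l
  · rw [tLit_of_pos hw] at ht
    exact Or.inl (ht ▸ hw)
  · cases l with
    | pos p =>
      by_cases hp : p ∈ Vs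
      · rw [tLit_pos_of_mem hw hp] at ht
        exact Or.inr ⟨p, (Lit.pos.inj ht).symm⟩
      · rw [tLit_pos_of_notMem hw hp] at ht
        exact nomatch ht
    | neg m =>
      rw [tLit_neg hw] at ht
      exact nomatch ht

lemma atomsAgg_rewAgg {B : Agg V} {q : V} (hq : q ∈ atomsAgg (rewAgg pF Vs B)) :
    q ∈ atomsAgg B ∨ ∃ p ∈ Vs, wtL B (.pos p) < 0 ∧ q = pF p := by
  obtain ⟨_, ⟨i, rfl⟩, hq⟩ := hq
  change q ∈ atomsLit (tLit pF Vs B _) at hq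
  have hl := ((litsNZ B).equivFin.symm i).2
  generalize ((litsNZ B).equivFin.symm i : Lit V) = l at hq hl
  have hat := atomsLit_subset_atomsAgg hl
  by_cases hw : 0 < wtL B l
  · rw [tLit_of_pos hw] at hq
    exact Or.inl (hat hq)
  · have hneg : wtL B l < 0 := lt_of_le_of_ne (not_lt.1 hw) (mem_litsNZ.1 hl).2
    cases l with
    | pos p =>
      by_cases hp : p ∈ Vs
      · rw [tLit_pos_of_mem hw hp] at hq
        exact Or.inr ⟨p, hp, hneg, hq⟩
      · rw [tLit_pos_of_notMem hw hp] at hq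
        exact Or.inl (hat hq)
    | neg m =>
      rw [tLit_neg hw] at hq
      exact Or.inl (hat hq)

lemma satAggRed_rewAgg_of_lt {B : Agg V} {I J E J' : Set V}
    (hE : ∀ q ∈ atomsAgg B, q ∈ I ↔ q ∈ E) (hJ : ∀ q ∈ atomsAgg B, q ∈ J → q ∈ J')
    (hpF : ∀ p ∈ Vs, wtL B (.pos p) < 0 → pF p ∉ J' → p ∈ J)
    (hVs : ∀ p ∉ Vs, wtL B (.pos p) < 0 → p ∈ I → p ∈ J)
    (h : B.b < aggSum B (satLitRed I J)) : satAggRed E J' (rewAgg pF Vs B) := by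
  refine (satAggWith_rewAgg_iff B _).2 (h.trans_le ?_)
  refine aggSum_le_aggSum (fun l hl hw hσ => ?_) (fun l hl hw hτ => ?_)
  all_goals have hIE := fun m (hm : atomsLit m ⊆ atomsLit l) =>
    satLit_congr (l := m) fun q hq => hE q (atomsLit_subset_atomsAgg hl (hm hq))
  · rw [rewVal, if_pos hw]
    cases l with
    | pos p => exact hJ p (atomsLit_subset_atomsAgg hl rfl) hσ
    | neg m => exact mt (hIE m subset_rfl).2 hσ
  · rw [rewVal, if_neg (lt_asymm hw)] at hτ
    cases l with
    | pos p =>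
      by_cases hp : p ∈ Vs
      · rw [tLit_pos_of_mem (lt_asymm hw) hp] at hτ
        exact hpF p hp hw hτ
      · rw [tLit_pos_of_notMem (lt_asymm hw) hp] at hτ
        exact hVs p hp hw ((hIE (.pos p) subset_rfl).2 (not_not.1 hτ))
    | neg m =>
      rw [tLit_neg (lt_asymm hw)] at hτ
      exact fun hm => hτ fun h => h ((hIE m subset_rfl).1 hm)

lemma lt_of_satAggRed_rewAgg {B : Agg V} {I J E J' : Set V}
    (hE : ∀ q ∈ atomsAgg B, q ∈ I ↔ q ∈ E) (hJ : ∀ q ∈ atomsAgg B, q ∈ J' → q ∈ J)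
    (hJI : J ⊆ I) (hpF : ∀ p ∈ Vs, wtL B (.pos p) < 0 → p ∈ J → pF p ∉ J')
    (h : satAggRed E J' (rewAgg pF Vs B)) : B.b < aggSum B (satLitRed I J) := by
  refine ((satAggWith_rewAgg_iff B _).1 h).trans_le ?_
  refine aggSum_le_aggSum (fun l hl hw hσ => ?_) (fun l hl hw hτ => ?_)
  all_goals have hIE := fun m (hm : atomsLit m ⊆ atomsLit l) =>
    satLit_congr (l := m) fun q hq => hE q (atomsLit_subset_atomsAgg hl (hm hq))
  · rw [rewVal, if_pos hw] at hσ
    cases l with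
    | pos p => exact hJ p (atomsLit_subset_atomsAgg hl rfl) hσ
    | neg m => exact mt (hIE m subset_rfl).1 hσ
  · rw [rewVal, if_neg (lt_asymm hw)]
    cases l with
    | pos p =>
      by_cases hp : p ∈ Vs
      · rw [tLit_pos_of_mem (lt_asymm hw) hp]
        exact hpF p hp hw hτ
      · rw [tLit_pos_of_notMem (lt_asymm hw) hp]
        exact not_not.2 ((hIE (.pos p) subset_rfl).1 (hJI hτ))
    | neg m =>
      rw [tLit_neg (lt_asymm hw)]
      exact fun h => h fun hm => hτ ((hIE m subset_rfl).2 hm)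

end Rewriting

section GtParts

variable {pF : V → V} {Vs : Set V}

/-- The aggregates with comparison `>` into which `pos(A,V)` splits `A`. -/
def gtParts (A : Agg V) : Set (Agg V) :=
  match A.op with
  | .gt => {gtA A}
  | .ne => {gtA A, negA A}

lemma mem_gtParts {A B : Agg V} : B ∈ gtParts A ↔ B = gtA A ∨ (A.op = .ne ∧ B = negA A) := by
  unfold gtParts
  cases A.op <;> simp

lemma gtA_eq_self {A : Agg V} (h : A.op = .gt) : gtA A = A := by
  obtain ⟨n, w, l, op, b⟩ := A
  cases h
  rfl

lemma atomsAgg_of_mem_gtParts {A B : Agg V} (hB : B ∈ gtParts A) : atomsAgg B = atomsAgg A := by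
  rcases mem_gtParts.1 hB with rfl | ⟨_, rfl⟩ <;> rfl

lemma wtL_negA (A : Agg V) (l : Lit V) : wtL (negA A) l = -wtL A l :=
  Finset.sum_neg_distrib _

lemma aggSum_negA (A : Agg V) (σ : Lit V → Prop) : aggSum (negA A) σ = -aggSum A σ :=
  Finset.sum_neg_distrib _

lemma satAggWith_iff_exists_gtParts (A : Agg V) (σ : Lit V → Prop) :
    satAggWith A σ ↔ ∃ B ∈ gtParts A, B.b < aggSum B σ := by
  unfold satAggWith gtParts
  cases A.op with
  | gt => simp only [Set.mem_singleton_iff, exists_eq_left]; rfl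
  | ne =>
    simp only [Set.mem_insert_iff, Set.mem_singleton_iff, exists_eq_or_imp, exists_eq_left,
      aggSum_negA]
    change _ ↔ A.b < aggSum A σ ∨ -A.b < -aggSum A σ
    omega

lemma aggSum_le_of_not_satAggWith {A B : Agg V} {σ : Lit V → Prop} (hB : B ∈ gtParts A)
    (h : ¬ satAggWith A σ) : aggSum B σ ≤ B.b :=
  not_lt.1 fun hlt => h ((satAggWith_iff_exists_gtParts A σ).2 ⟨B, hB, hlt⟩)

lemma arc_cond_of_mem_gtParts {A B : Agg V} (hB : B ∈ gtParts A) {x : V}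
    (h : 0 < wtL B (.pos x)) :
    (A.op = .gt ∧ 0 < wt A x) ∨ (A.op = .ne ∧ wt A x ≠ 0) := by
  rcases mem_gtParts.1 hB with rfl | ⟨hop, rfl⟩
  · cases hop : A.op
    · exact Or.inl ⟨rfl, h⟩
    · exact Or.inr ⟨rfl, h.ne'⟩
  · rw [wtL_negA] at h
    exact Or.inr ⟨hop, by unfold wt; omega⟩

lemma mem_posProg {aux : V} {A : Agg V} {ρ : Rule V} :
    ρ ∈ posProg aux pF Vs A ↔ ∃ B ∈ gtParts A, ρ ∈ posGt aux pF Vs B := by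
  unfold posProg gtParts
  cases hop : A.op
  · simp [gtA_eq_self hop]
  · simp

lemma mem_AtF {aux : V} {A : Agg V} {p : V} (hinj : Function.Injective pF) :
    p ∈ AtF aux pF Vs A ↔ ∃ B ∈ gtParts A, p ∈ Vs ∧ wtL B (.pos p) < 0 := by
  refine mem_posProg.trans ⟨?_, fun ⟨B, hB, hp, hw⟩ => ⟨B, hB, Or.inr ⟨p, hp, hw, by simp⟩⟩⟩
  rintro ⟨B, hB, h | ⟨q, hq, hw, h⟩⟩
  · simp at h
  · simp only [Rule.mk.injEq, Finset.singleton_inj, List.cons.injEq, BLit.lit.injEq,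
      and_true] at h
    rcases h with h | h | h
    · simp at h
    · exact hinj h ▸ ⟨B, hB, hq, hw⟩
    · simp at h

lemma AtF_subset_atomsAgg {aux : V} {A : Agg V} (hinj : Function.Injective pF) :
    AtF aux pF Vs A ⊆ atomsAgg A := fun p hp => by
  obtain ⟨B, hB, _, hw⟩ := (mem_AtF hinj).1 hp
  exact atomsAgg_of_mem_gtParts hB ▸ mem_atomsAgg_of_wtL_ne_zero hw.ne

end GtParts

def oldAtoms (P : Program V) (A : Agg V) : Set V := atomsProg P ∪ atomsAgg A

def newAtoms (aux : V) (pF : V → V) (Vs : Set V) (A : Agg V) : Set V :=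
  {aux} ∪ pF '' AtF aux pF Vs A

section RewProg

variable {aux : V} {pF : V → V} {P : Program V} {A : Agg V} {Vs : Set V}

lemma replB_of_ne {bl : BLit V} (h : bl ≠ .agg A) : replB aux A bl = bl := by
  cases bl with
  | lit l => rfl
  | agg B => exact if_neg fun hB => h (congrArg BLit.agg hB)

lemma replB_self : replB aux A (.agg A) = .lit (.pos aux) := if_pos rfl

lemma forall_mem_map_replB {body : List (BLit V)} {f g : BLit V → Prop}
    (hother : ∀ bl ∈ body, bl ≠ .agg A → f bl → g bl)
    (hA : .agg A ∈ body → f (.agg A) → g (.lit (.pos aux)))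
    (h : ∀ bl ∈ body, f bl) : ∀ bl ∈ body.map (replB aux A), g bl := by
  simp only [List.mem_map, forall_exists_index, and_imp, forall_apply_eq_imp_iff₂]
  intro bl hbl
  by_cases hA' : bl = .agg A
  · subst hA'
    rw [replB_self]
    exact hA hbl (h _ hbl)
  · rw [replB_of_ne hA']
    exact hother bl hbl hA' (h bl hbl)

lemma forall_mem_of_forall_mem_map_replB {body : List (BLit V)} {f g : BLit V → Prop}
    (hother : ∀ bl ∈ body, bl ≠ .agg A → g bl → f bl)
    (hA : .agg A ∈ body → g (.lit (.pos aux)) → f (.agg A))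
    (h : ∀ bl ∈ body.map (replB aux A), g bl) : ∀ bl ∈ body, f bl := by
  intro bl hbl
  have hg := h _ (List.mem_map_of_mem hbl)
  by_cases hA' : bl = .agg A
  · subst hA'
    rw [replB_self] at hg
    exact hA hbl hg
  · rw [replB_of_ne hA'] at hg
    exact hother bl hbl hA' hg

lemma satRedProg_image_replRule {I J E J' : Set V} (hred : satRedProg I J P)
    (hE : ∀ q ∈ atomsProg P, q ∈ I ↔ q ∈ E) (hJ : ∀ q ∈ atomsProg P, q ∈ J ↔ q ∈ J')
    (hauxE : aux ∈ E → satAgg I A) (hauxJ : aux ∈ J' → satAggRed I J A) :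
    satRedProg E J' (replRule aux A '' P) := by
  rintro _ ⟨r, hr, rfl⟩ hb hbr
  have hat : ∀ bl ∈ r.body, ∀ q ∈ atomsB bl, q ∈ atomsProg P :=
    fun bl hbl q hq => mem_atomsProg_of_mem_body hr hbl hq
  obtain ⟨w, hw, hwJ⟩ := hred r hr
    (forall_mem_of_forall_mem_map_replB
      (fun bl hbl _ => (satB_congr fun q hq => hE q (hat bl hbl q hq)).2) (fun _ => hauxE) hb)
    (forall_mem_of_forall_mem_map_replB
      (fun bl hbl _ => (satBRed_congr (fun q hq => hE q (hat bl hbl q hq))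
        fun q hq => hJ q (hat bl hbl q hq)).2) (fun _ => hauxJ) hbr)
  exact ⟨w, hw, (hJ w (mem_atomsProg_of_mem_head hr hw)).1 hwJ⟩

lemma satRedProg_of_image_replRule {I J E J' : Set V}
    (h : satRedProg E J' (replRule aux A '' P))
    (hE : ∀ q ∈ atomsProg P, q ∈ I ↔ q ∈ E) (hJ : ∀ q ∈ atomsProg P, q ∈ J ↔ q ∈ J')
    (hauxE : satAgg I A → aux ∈ E)
    (hauxJ : A ∈ AgOf P → satAgg I A → satAggRed I J A → aux ∈ J') :
    satRedProg I J P := by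
  intro r hr hb hbr
  have hat : ∀ bl ∈ r.body, ∀ q ∈ atomsB bl, q ∈ atomsProg P :=
    fun bl hbl q hq => mem_atomsProg_of_mem_body hr hbl hq
  obtain ⟨w, hw, hwJ⟩ := h _ ⟨r, hr, rfl⟩
    (forall_mem_map_replB
      (fun bl hbl _ => (satB_congr fun q hq => hE q (hat bl hbl q hq)).1) (fun _ => hauxE) hb)
    (forall_mem_map_replB
      (fun bl hbl _ => (satBRed_congr (fun q hq => hE q (hat bl hbl q hq))
        fun q hq => hJ q (hat bl hbl q hq)).1) (fun hA => hauxJ ⟨r, hr, hA⟩ (hb _ hA)) hbr)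
  exact ⟨w, hw, (hJ w (mem_atomsProg_of_mem_head hr hw)).2 hwJ⟩

lemma AgOf_rewProg {A' : Agg V} (h : A' ∈ AgOf (rewProg aux pF P A Vs)) :
    (∃ B ∈ gtParts A, A' = rewAgg pF Vs B) ∨ (A' ∈ AgOf P ∧ A' ≠ A) := by
  obtain ⟨ρ, hρ | ⟨r, hr, rfl⟩, hA'⟩ := h
  · obtain ⟨B, hB, hρ⟩ := mem_posProg.1 hρ
    rcases hρ with rfl | ⟨p, -, -, rfl | rfl | rfl⟩ <;> simp at hA'
    exact Or.inl ⟨B, hB, hA'⟩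
  · obtain ⟨bl, hbl, hbl'⟩ := List.mem_map.1 hA'
    by_cases hbA : bl = .agg A
    · subst hbA
      simp [replB_self] at hbl'
    · rw [replB_of_ne hbA] at hbl'
      subst hbl'
      exact Or.inr ⟨⟨r, hr, hbl⟩, fun h => hbA (h ▸ rfl)⟩

lemma atomsProg_posProg_subset (hinj : Function.Injective pF) :
    atomsProg (posProg aux pF Vs A) ⊆ atomsAgg A ∪ newAtoms aux pF Vs A := by
  rintro q ⟨ρ, hρ, hq⟩
  obtain ⟨B, hB, hρ⟩ := mem_posProg.1 hρ
  have hpF : ∀ p ∈ Vs, wtL B (.pos p) < 0 → pF p ∈ newAtoms aux pF Vs A :=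
    fun p hp hw => Or.inr ⟨p, (mem_AtF hinj).2 ⟨B, hB, hp, hw⟩, rfl⟩
  have hp : ∀ p, wtL B (.pos p) < 0 → p ∈ atomsAgg A :=
    fun p hw => atomsAgg_of_mem_gtParts hB ▸ mem_atomsAgg_of_wtL_ne_zero hw.ne
  rcases hρ with rfl | ⟨p, hpV, hw, rfl | rfl | rfl⟩ <;>
    simp only [List.mem_singleton, Finset.mem_insert, Finset.mem_singleton,
      exists_eq_left] at hq
  · rcases hq with rfl | hq
    · exact Or.inr (Or.inl rfl)
    · rcases atomsAgg_rewAgg hq with hq | ⟨p, hpV, hw, rfl⟩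
      · exact Or.inl (atomsAgg_of_mem_gtParts hB ▸ hq)
      · exact Or.inr (hpF p hpV hw)
  · rcases hq with rfl | rfl
    · exact Or.inr (hpF _ hpV hw)
    · exact Or.inl (hp _ hw)
  · rcases hq with rfl | rfl
    · exact Or.inr (hpF _ hpV hw)
    · exact Or.inr (Or.inl rfl)
  · rcases hq with (rfl | rfl) | rfl
    · exact Or.inl (hp _ hw)
    · exact Or.inr (hpF _ hpV hw)
    · exact Or.inr (Or.inl rfl)

lemma atomsProg_image_replRule_subset :
    atomsProg (replRule aux A '' P) ⊆ atomsProg P ∪ {aux} := by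
  rintro q ⟨_, ⟨r, hr, rfl⟩, hq | ⟨bl', hbl', hq⟩⟩
  · exact Or.inl (mem_atomsProg_of_mem_head hr hq)
  · obtain ⟨bl, hbl, rfl⟩ := List.mem_map.1 hbl'
    by_cases hbA : bl = .agg A
    · subst hbA
      rw [replB_self] at hq
      exact Or.inr hq
    · rw [replB_of_ne hbA] at hq
      exact Or.inl (mem_atomsProg_of_mem_body hr hbl hq)

lemma atomsProg_rewProg_subset (hinj : Function.Injective pF) :
    atomsProg (rewProg aux pF P A Vs) ⊆ oldAtoms P A ∪ newAtoms aux pF Vs A := by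
  rintro q ⟨ρ, hρ | hρ, hq⟩
  · rcases atomsProg_posProg_subset hinj ⟨ρ, hρ, hq⟩ with h | h
    · exact Or.inl (Or.inr h)
    · exact Or.inr h
  · rcases atomsProg_image_replRule_subset ⟨ρ, hρ, hq⟩ with h | h
    · exact Or.inl (Or.inl h)
    · exact Or.inr (Or.inl h)

end RewProg

structure IsFresh (aux : V) (pF : V → V) (P : Program V) (A : Agg V) : Prop where
  aux_notMem : aux ∉ oldAtoms P A
  pF_notMem : ∀ p, pF p ∉ oldAtoms P A
  pF_ne_aux : ∀ p, pF p ≠ aux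
  injective : Function.Injective pF

section Extension

variable {aux : V} {pF : V → V} {P : Program V} {A : Agg V} {Vs : Set V}

lemma IsFresh.notMem_newAtoms (hF : IsFresh aux pF P A) {q : V} (hq : q ∈ oldAtoms P A) :
    q ∉ newAtoms aux pF Vs A := by
  rintro (rfl | ⟨p, -, rfl⟩)
  exacts [hF.aux_notMem hq, hF.pF_notMem p hq]

lemma mem_extSet_of_mem_oldAtoms (hF : IsFresh aux pF P A) {I J : Set V} {q : V}
    (hq : q ∈ oldAtoms P A) : q ∈ extSet aux pF Vs A J I ↔ q ∈ J := by
  have hqaux : q ≠ aux := fun h => hF.aux_notMem (h ▸ hq)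
  have hqpF : ∀ p, pF p ≠ q := fun p h => hF.pF_notMem p (h ▸ hq)
  unfold extSet
  split_ifs <;> simp [hqaux, hqpF]

lemma aux_mem_extSet_iff (hF : IsFresh aux pF P A) {I J : Set V} (hJ : J ⊆ oldAtoms P A) :
    aux ∈ extSet aux pF Vs A J I ↔ satAgg I A ∧ satAggRed I J A := by
  have hauxJ : aux ∉ J := fun h => hF.aux_notMem (hJ h)
  unfold extSet
  split_ifs <;> simp_all [hF.pF_ne_aux]

lemma pF_mem_extSet_iff (hF : IsFresh aux pF P A) {I J : Set V} (hJ : J ⊆ oldAtoms P A)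
    {p : V} : pF p ∈ extSet aux pF Vs A J I ↔
      p ∈ AtF aux pF Vs A ∧ (satAgg I A → satAggRed I J A ∨ p ∉ J) ∧ (¬ satAgg I A → p ∉ I) := by
  have hpJ : pF p ∉ J := fun h => hF.pF_notMem p (hJ h)
  unfold extSet
  split_ifs <;> simp_all [hF.injective.eq_iff, (hF.pF_ne_aux p)]

lemma extSet_subset_union (J I : Set V) :
    extSet aux pF Vs A J I ⊆ J ∪ newAtoms aux pF Vs A := by
  unfold extSet newAtoms
  split_ifs <;> intro q hq <;> aesop

lemma extSet_subset_of (hF : IsFresh aux pF P A) {I J K : Set V} (hJ : J ⊆ oldAtoms P A)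
    (hJK : J ⊆ K) (haux : satAgg I A → satAggRed I J A → aux ∈ K)
    (hpF : ∀ p ∈ AtF aux pF Vs A, (satAgg I A → satAggRed I J A ∨ p ∉ J) →
      (¬ satAgg I A → p ∉ I) → pF p ∈ K) :
    extSet aux pF Vs A J I ⊆ K := by
  intro q hq
  rcases extSet_subset_union J I hq with hq' | rfl | ⟨p, -, rfl⟩
  · exact hJK hq'
  · exact ((aux_mem_extSet_iff hF hJ).1 hq).elim haux
  · obtain ⟨hp, h1, h2⟩ := (pF_mem_extSet_iff hF hJ).1 hq
    exact hpF p hp h1 h2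

lemma extSet_diff_newAtoms (hF : IsFresh aux pF P A) {I J : Set V} (hJ : J ⊆ oldAtoms P A) :
    extSet aux pF Vs A J I \ newAtoms aux pF Vs A = J := by
  ext q
  refine ⟨fun hq => (extSet_subset_union J I hq.1).resolve_right hq.2, fun hq => ?_⟩
  exact ⟨(mem_extSet_of_mem_oldAtoms hF (hJ hq)).2 hq, hF.notMem_newAtoms (hJ hq)⟩

lemma extSet_inter_atomsProg (hF : IsFresh aux pF P A) (I J : Set V) :
    extSet aux pF Vs A J I ∩ atomsProg P = J ∩ atomsProg P := by
  ext q
  exact and_congr_left fun hq => mem_extSet_of_mem_oldAtoms hF (Or.inl hq)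

lemma extSet_ssubset_extSet (hF : IsFresh aux pF P A) {I J : Set V} (hI : I ⊆ oldAtoms P A)
    (hJI : J ⊂ I) : extSet aux pF Vs A J I ⊂ extSet aux pF Vs A I I := by
  have hsat : satAggRed I I A ↔ satAgg I A := satAggRed_self I A
  refine Set.ssubset_iff_of_subset (extSet_subset_of hF (hJI.1.trans hI)
    (fun q hq => (mem_extSet_of_mem_oldAtoms hF (hI (hJI.1 hq))).2 (hJI.1 hq))
    (fun hs _ => (aux_mem_extSet_iff hF hI).2 ⟨hs, hsat.2 hs⟩)
    (fun p hp _ h2 => (pF_mem_extSet_iff hF hI).2 ⟨hp, fun hs => Or.inl (hsat.2 hs), h2⟩)) |>.2 ?_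
  obtain ⟨x, hxI, hxJ⟩ := Set.exists_of_ssubset hJI
  exact ⟨x, (mem_extSet_of_mem_oldAtoms hF (hI hxI)).2 hxI,
    fun h => hxJ ((mem_extSet_of_mem_oldAtoms hF (hI hxI)).1 h)⟩

end Extension

section ReductModels

variable {aux : V} {pF : V → V} {P : Program V} {A : Agg V} {Vs : Set V} {E J : Set V}

lemma aux_mem_of_satRedProg (h : satRedProg E J (rewProg aux pF P A Vs)) {B : Agg V}
    (hB : B ∈ gtParts A) (hE : satAgg E (rewAgg pF Vs B)) (hJ : satAggRed E J (rewAgg pF Vs B)) :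
    aux ∈ J := by
  obtain ⟨w, hw, hwJ⟩ := h _ (Or.inl (mem_posProg.2 ⟨B, hB, Or.inl rfl⟩))
    (satBody_singleton.2 hE) (satBodyRed_singleton.2 hJ)
  rwa [Finset.mem_singleton.1 hw] at hwJ

lemma pF_mem_of_satRedProg_of_notMem (hinj : Function.Injective pF)
    (h : satRedProg E J (rewProg aux pF P A Vs)) {p : V} (hp : p ∈ AtF aux pF Vs A)
    (hpE : p ∉ E) : pF p ∈ J := by
  obtain ⟨B, hB, hpV, hw⟩ := (mem_AtF hinj).1 hp
  obtain ⟨w, hw, hwJ⟩ := h _ (Or.inl (mem_posProg.2 ⟨B, hB, Or.inr ⟨p, hpV, hw, Or.inl rfl⟩⟩))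
    (satBody_singleton.2 hpE) (satBodyRed_singleton.2 hpE)
  rwa [Finset.mem_singleton.1 hw] at hwJ

lemma pF_mem_of_satRedProg_of_aux_mem (h : satRedProg E J (rewProg aux pF P A Vs)) {p : V}
    (hp : p ∈ AtF aux pF Vs A) (hE : aux ∈ E) (hJ : aux ∈ J) : pF p ∈ J := by
  obtain ⟨w, hw, hwJ⟩ := h _ (Or.inl hp) (satBody_singleton.2 hE) (satBodyRed_singleton.2 hJ)
  rwa [Finset.mem_singleton.1 hw] at hwJ

lemma mem_or_pF_mem_of_satRedProg (hinj : Function.Injective pF)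
    (h : satRedProg E J (rewProg aux pF P A Vs)) {p : V} (hp : p ∈ AtF aux pF Vs A)
    (hE : aux ∈ E) : p ∈ J ∨ pF p ∈ J := by
  obtain ⟨B, hB, hpV, hw⟩ := (mem_AtF hinj).1 hp
  have hb : satB E (.lit (.neg (.neg (.pos aux)))) := fun h => h hE
  obtain ⟨w, hw, hwJ⟩ := h _
    (Or.inl (mem_posProg.2 ⟨B, hB, Or.inr ⟨p, hpV, hw, Or.inr (Or.inr rfl)⟩⟩))
    (satBody_singleton.2 hb) (satBodyRed_singleton.2 hb)
  rcases Finset.mem_insert.1 hw with rfl | hw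
  · exact Or.inl hwJ
  · exact Or.inr (Finset.mem_singleton.1 hw ▸ hwJ)

end ReductModels

section ExtensionModels

variable {aux : V} {pF : V → V} {P : Program V} {A : Agg V} {Vs : Set V}

lemma not_satAggRed_rewAgg_extSet (hF : IsFresh aux pF P A) {B : Agg V} (hB : B ∈ gtParts A)
    {I J I' : Set V} (hI : I ⊆ oldAtoms P A) (hJI : J ⊆ I)
    (hI' : ∀ q ∈ oldAtoms P A, q ∈ I' ↔ q ∈ I) (h : ¬ satAggRed I J A) :
    ¬ satAggRed I' (extSet aux pF Vs A J I) (rewAgg pF Vs B) := by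
  have hBold : ∀ q ∈ atomsAgg B, q ∈ oldAtoms P A :=
    fun q hq => Or.inr (atomsAgg_of_mem_gtParts hB ▸ hq)
  intro hsat
  refine not_lt.2 (aggSum_le_of_not_satAggWith hB h) (lt_of_satAggRed_rewAgg
    (fun q hq => (hI' q (hBold q hq)).symm)
    (fun q hq => (mem_extSet_of_mem_oldAtoms hF (hBold q hq)).1) hJI (fun p _ _ hpJ hpF => ?_) hsat)
  obtain ⟨-, h1, h2⟩ := (pF_mem_extSet_iff hF (hJI.trans hI)).1 hpF
  by_cases hs : satAgg I A
  · exact (h1 hs).elim h (· hpJ)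
  · exact h2 hs (hJI hpJ)

lemma satRedProg_posProg_extSet (hF : IsFresh aux pF P A) {I J : Set V}
    (hI : I ⊆ oldAtoms P A) (hJI : J ⊆ I) :
    satRedProg (extSet aux pF Vs A I I) (extSet aux pF Vs A J I) (posProg aux pF Vs A) := by
  have hJ := hJI.trans hI
  have hE := fun q (hq : q ∈ oldAtoms P A) =>
    mem_extSet_of_mem_oldAtoms (Vs := Vs) (J := I) (I := I) hF hq
  intro ρ hρ hb hbr
  obtain ⟨B, hB, rfl | ⟨p, hpV, hw, rfl | rfl | rfl⟩⟩ := mem_posProg.1 hρ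
  all_goals simp only [satBody_singleton, satBodyRed_singleton] at hb hbr
  · refine ⟨aux, Finset.mem_singleton_self _, (aux_mem_extSet_iff hF hJ).2 ?_⟩
    by_contra hs
    by_cases hsI : satAgg I A
    · exact not_satAggRed_rewAgg_extSet hF hB hI hJI hE (fun h => hs ⟨hsI, h⟩) hbr
    · exact not_satAggRed_rewAgg_extSet hF hB hI subset_rfl hE
        (mt (satAggRed_self I A).1 hsI) ((satAggRed_self _ _).2 hb)
  all_goals have hp : p ∈ AtF aux pF Vs A := (mem_AtF hF.injective).2 ⟨B, hB, hpV, hw⟩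
  · have hpI : p ∉ I := mt (hE p (Or.inr (AtF_subset_atomsAgg hF.injective hp))).2 hb
    exact ⟨pF p, Finset.mem_singleton_self _,
      (pF_mem_extSet_iff hF hJ).2 ⟨hp, fun _ => Or.inr (mt (@hJI p) hpI), fun _ => hpI⟩⟩
  · obtain ⟨hs, hsr⟩ := (aux_mem_extSet_iff hF hJ).1 hbr
    exact ⟨pF p, Finset.mem_singleton_self _,
      (pF_mem_extSet_iff hF hJ).2 ⟨hp, fun _ => Or.inl hsr, fun h => absurd hs h⟩⟩
  · have hs := ((aux_mem_extSet_iff hF hI).1 (not_not.1 hb)).1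
    by_cases hpJ : p ∈ J
    · exact ⟨p, by simp, (mem_extSet_of_mem_oldAtoms hF (hJ hpJ)).2 hpJ⟩
    · exact ⟨pF p, by simp,
        (pF_mem_extSet_iff hF hJ).2 ⟨hp, fun _ => Or.inr hpJ, fun h => absurd hs h⟩⟩

lemma satRedProg_rewProg_extSet (hF : IsFresh aux pF P A) {I J : Set V}
    (hI : I ⊆ oldAtoms P A) (hJI : J ⊆ I) (hred : satRedProg I J P) :
    satRedProg (extSet aux pF Vs A I I) (extSet aux pF Vs A J I) (rewProg aux pF P A Vs) :=
  satRedProg_union.2 ⟨satRedProg_posProg_extSet hF hI hJI,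
    satRedProg_image_replRule hred
      (fun _ hq => (mem_extSet_of_mem_oldAtoms hF (Or.inl hq)).symm)
      (fun _ hq => (mem_extSet_of_mem_oldAtoms hF (Or.inl hq)).symm)
      (fun h => ((aux_mem_extSet_iff hF hI).1 h).1)
      (fun h => ((aux_mem_extSet_iff hF (hJI.trans hI)).1 h).2)⟩

end ExtensionModels

section StableRewriting

variable {aux : V} {pF : V → V} {P : Program V} {A : Agg V} {Vs : Set V}

lemma satRedProg_posProg_extSet_self (hF : IsFresh aux pF P A) {I I' : Set V}
    (hI : I ⊆ oldAtoms P A) (hI' : ∀ q ∈ oldAtoms P A, q ∈ I' ↔ q ∈ I) :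
    satRedProg I' (extSet aux pF Vs A I I) (posProg aux pF Vs A) := by
  have hsat : satAggRed I I A ↔ satAgg I A := satAggRed_self I A
  intro ρ hρ hb hbr
  obtain ⟨B, hB, rfl | ⟨p, hpV, hw, rfl | rfl | rfl⟩⟩ := mem_posProg.1 hρ
  all_goals simp only [satBody_singleton, satBodyRed_singleton] at hb hbr
  · refine ⟨aux, Finset.mem_singleton_self _, (aux_mem_extSet_iff hF hI).2 ?_⟩
    by_contra hs
    exact not_satAggRed_rewAgg_extSet hF hB hI subset_rfl hI'
      (fun h => hs ⟨hsat.1 h, h⟩) hbr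
  all_goals have hp : p ∈ AtF aux pF Vs A := (mem_AtF hF.injective).2 ⟨B, hB, hpV, hw⟩
  all_goals have hpI : p ∈ I ↔ p ∈ I' :=
    (hI' p (Or.inr (AtF_subset_atomsAgg hF.injective hp))).symm
  · exact ⟨pF p, Finset.mem_singleton_self _,
      (pF_mem_extSet_iff hF hI).2 ⟨hp, fun _ => Or.inr (mt hpI.1 hb), fun _ => mt hpI.1 hb⟩⟩
  · obtain ⟨hs, hsr⟩ := (aux_mem_extSet_iff hF hI).1 hbr
    exact ⟨pF p, Finset.mem_singleton_self _,
      (pF_mem_extSet_iff hF hI).2 ⟨hp, fun _ => Or.inl hsr, fun h => absurd hs h⟩⟩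
  · by_cases hpI' : p ∈ I
    · exact ⟨p, by simp, (mem_extSet_of_mem_oldAtoms hF (hI hpI')).2 hpI'⟩
    · exact ⟨pF p, by simp,
        (pF_mem_extSet_iff hF hI).2 ⟨hp, fun _ => Or.inr hpI', fun _ => hpI'⟩⟩

lemma diff_newAtoms_subset_oldAtoms (hinj : Function.Injective pF) {I' : Set V}
    (hI' : stable (rewProg aux pF P A Vs) I') : I' \ newAtoms aux pF Vs A ⊆ oldAtoms P A :=
  fun _ hq => (atomsProg_rewProg_subset hinj (stable_subset_atomsProg hI' hq.1)).resolve_right hq.2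

lemma aux_mem_of_satProg_rewProg (hF : IsFresh aux pF P A) {I I' : Set V}
    (hI' : satProg I' (rewProg aux pF P A Vs)) (hII' : ∀ q ∈ oldAtoms P A, q ∈ I' ↔ q ∈ I)
    (hs : satAgg I A) : aux ∈ I' := by
  have hmodel := satRedProg_self_iff.2 hI'
  obtain ⟨B, hB, hlt⟩ := (satAggWith_iff_exists_gtParts A _).1 ((satAggRed_self I A).2 hs)
  have hBold : ∀ q ∈ atomsAgg B, q ∈ oldAtoms P A :=
    fun q hq => Or.inr (atomsAgg_of_mem_gtParts hB ▸ hq)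
  have hrew : satAggRed I' I' (rewAgg pF Vs B) := by
    refine satAggRed_rewAgg_of_lt (fun q hq => (hII' q (hBold q hq)).symm)
      (fun q hq h => (hII' q (hBold q hq)).2 h) (fun p hpV hw hpF => ?_) (fun _ _ _ h => h) hlt
    have hp : p ∈ AtF aux pF Vs A := (mem_AtF hF.injective).2 ⟨B, hB, hpV, hw⟩
    by_contra hpI
    exact hpF (pF_mem_of_satRedProg_of_notMem hF.injective hmodel hp
      (mt (hII' p (Or.inr (AtF_subset_atomsAgg hF.injective hp))).1 hpI))
  exact aux_mem_of_satRedProg hmodel hB ((satAggRed_self _ _).1 hrew) hrew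

lemma extSet_subset_of_satProg_rewProg (hF : IsFresh aux pF P A) {I I' : Set V}
    (hI : I ⊆ oldAtoms P A) (hI' : satProg I' (rewProg aux pF P A Vs))
    (hII' : ∀ q ∈ oldAtoms P A, q ∈ I' ↔ q ∈ I) : extSet aux pF Vs A I I ⊆ I' := by
  have hmodel := satRedProg_self_iff.2 hI'
  have haux := aux_mem_of_satProg_rewProg hF hI' hII'
  refine extSet_subset_of hF hI (fun q hq => (hII' q (hI hq)).2 hq) (fun hs _ => haux hs)
    fun p hp _ h2 => ?_
  by_cases hpI : p ∈ I
  · have hs : satAgg I A := by_contra fun hs => h2 hs hpI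
    exact pF_mem_of_satRedProg_of_aux_mem hmodel hp (haux hs) (haux hs)
  · exact pF_mem_of_satRedProg_of_notMem hF.injective hmodel hp
      (mt (hII' p (Or.inr (AtF_subset_atomsAgg hF.injective hp))).1 hpI)

/-- `ext(I,I)` is a model of `F(I', rew(Π,A,V))` contained in `I'`, so minimality of `I'`
forces equality. -/
lemma eq_extSet_of_stable_rewProg (hF : IsFresh aux pF P A) {I' : Set V}
    (hI' : stable (rewProg aux pF P A Vs) I') :
    I' = extSet aux pF Vs A (I' \ newAtoms aux pF Vs A) (I' \ newAtoms aux pF Vs A) := by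
  set I := I' \ newAtoms aux pF Vs A
  have hI : I ⊆ oldAtoms P A := diff_newAtoms_subset_oldAtoms hF.injective hI'
  have hII' : ∀ q ∈ oldAtoms P A, q ∈ I' ↔ q ∈ I :=
    fun q hq => ⟨fun h => ⟨h, hF.notMem_newAtoms hq⟩, fun h => h.1⟩
  have hred : satRedProg I' (extSet aux pF Vs A I I) (rewProg aux pF P A Vs) := by
    refine satRedProg_union.2 ⟨satRedProg_posProg_extSet_self hF hI hII', ?_⟩
    rintro _ ⟨r, hr, rfl⟩ hb _
    obtain ⟨w, hw, hwI'⟩ := hI'.1 _ (Or.inr ⟨r, hr, rfl⟩) hb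
    have hwold : w ∈ oldAtoms P A := Or.inl (mem_atomsProg_of_mem_head hr hw)
    exact ⟨w, hw, (mem_extSet_of_mem_oldAtoms hF hwold).2 ((hII' w hwold).1 hwI')⟩
  by_contra hne
  exact hI'.2 _ ((extSet_subset_of_satProg_rewProg hF hI hI'.1 hII').ssubset_of_ne
    (Ne.symm hne)) hred

lemma stable_of_stable_rewProg_extSet (hF : IsFresh aux pF P A) {I : Set V}
    (hI : I ⊆ oldAtoms P A) (h : stable (rewProg aux pF P A Vs) (extSet aux pF Vs A I I)) :
    stable P I := by
  have hE := fun q (hq : q ∈ atomsProg P) =>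
    (mem_extSet_of_mem_oldAtoms (Vs := Vs) (J := I) (I := I) hF (Or.inl hq)).symm
  have hauxE : satAgg I A → aux ∈ extSet aux pF Vs A I I :=
    fun hs => (aux_mem_extSet_iff hF hI).2 ⟨hs, (satAggRed_self I A).2 hs⟩
  refine ⟨satRedProg_self_iff.1 (satRedProg_of_image_replRule
    (satRedProg_union.1 (satRedProg_self_iff.2 h.1)).2 hE hE hauxE fun _ hs _ => hauxE hs),
    fun J hJI hred => h.2 _ (extSet_ssubset_extSet hF hI hJI) ?_⟩
  exact satRedProg_rewProg_extSet hF hI hJI.1 hred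

end StableRewriting

section Localization

variable {Q : Program V}

lemma exists_mem_diff_of_satAggRed {I J J₂ : Set V} {B : Agg V} (hJJ : J ⊆ J₂)
    (h₂ : satAggRed I J₂ B) (h₁ : ¬ satAggRed I J B) :
    ∃ p ∈ J₂, p ∉ J ∧ ((B.op = .gt ∧ 0 < wt B p) ∨ (B.op = .ne ∧ wt B p ≠ 0)) := by
  by_contra hno
  have hmono : ∀ l, satLitRed I J l → satLitRed I J₂ l := fun l => by
    cases l with
    | pos p => exact fun h => hJJ h
    | neg m => exact id
  have hback : ∀ l ∈ litsNZ B, (B.op = .gt → 0 < wtL B l) → satLitRed I J₂ l → satLitRed I J l :=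
    fun l hl hw h => by
    cases l with
    | pos p =>
      by_contra hpJ
      refine hno ⟨p, h, hpJ, ?_⟩
      cases hop : B.op
      exacts [Or.inl ⟨rfl, hw hop⟩, Or.inr ⟨rfl, (mem_litsNZ.1 hl).2⟩]
    | neg m => exact h
  unfold satAggRed satAggWith at h₁ h₂
  cases hop : B.op <;> rw [hop] at h₁ h₂
  · have := aggSum_le_aggSum (fun l hl hw => hback l hl fun _ => hw) fun l _ _ => hmono l
    omega
  · refine h₁ (aggSum_congr_litsNZ (fun l hl => ⟨hmono l, hback l hl fun h => ?_⟩) ▸ h₂)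
    simp [hop] at h

lemma satBodyRed_of_not_reach {r : Rule V} (hr : r ∈ Q) {a : V} (ha : a ∈ r.head)
    {I J J₂ : Set V} (hJJ : J ⊆ J₂)
    (hreach : ∀ p ∈ J₂, p ∉ J → ¬ Relation.ReflTransGen (arc Q) (.inl a) (.inl p))
    (h : satBodyRed I J₂ r) : satBodyRed I J r := by
  intro bl hbl
  have h₂ := h bl hbl
  cases bl with
  | lit l =>
    cases l with
    | pos p =>
      by_contra hpJ
      exact hreach p h₂ hpJ (.single (Or.inl ⟨r, hr, ⟨a, rfl, ha⟩, Or.inl ⟨p, rfl, hbl⟩⟩))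
    | neg m => exact h₂
  | agg B =>
    by_contra h₁
    obtain ⟨p, hp₂, hpJ, hc⟩ := exists_mem_diff_of_satAggRed hJJ h₂ h₁
    have harc₁ : arc Q (.inl a) (.inr B) := Or.inl ⟨r, hr, ⟨a, rfl, ha⟩, Or.inr ⟨B, rfl, hbl⟩⟩
    have harc₂ : arc Q (.inr B) (.inl p) := Or.inr ⟨B, p, rfl, rfl, ⟨r, hr, hbl⟩, hc⟩
    exact hreach p hp₂ hpJ ((Relation.ReflTransGen.single harc₁).tail harc₂)

lemma exists_mem_forall_reflTransGen {α : Type*} {X : Set α} (hX : X.Finite) (hne : X.Nonempty)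
    (G : α → α → Prop) :
    ∃ x ∈ X, ∀ y ∈ X, Relation.ReflTransGen G x y → Relation.ReflTransGen G y x := by
  classical
  let reach x := hX.toFinset.filter (Relation.ReflTransGen G x ·)
  obtain ⟨x, hx, hmin⟩ := hX.toFinset.exists_min_image (fun x => (reach x).card)
    (hX.toFinset_nonempty.2 hne)
  refine ⟨x, hX.mem_toFinset.1 hx, fun y hy hxy => by_contra fun hyx => ?_⟩
  have hlt : (reach y).card < (reach x).card := by
    refine Finset.card_lt_card ⟨fun z hz => ?_, fun hsub => hyx ?_⟩
    · simp only [reach, Finset.mem_filter] at hz ⊢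
      exact ⟨hz.1, hxy.trans hz.2⟩
    · exact (Finset.mem_filter.1 (hsub (Finset.mem_filter.2 ⟨hx, .refl⟩))).2
  exact (hmin y (hX.mem_toFinset.2 hy)).not_gt hlt

/-- Remove from `I` only the atoms of `I \ J` reachable from an atom of `I \ J` lying in a sink
component of `G_Q` restricted to `I \ J`. -/
lemma exists_satRedProg_mreach {I J : Set V} (hI : I.Finite) (hmodel : satProg I Q)
    (hJ : J ⊂ I) (hred : satRedProg I J Q) :
    ∃ J₂ ⊂ I, satRedProg I J₂ Q ∧
      ∀ p ∈ I \ J₂, ∀ q ∈ I \ J₂, mreach Q (.inl p) (.inl q) := by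
  obtain ⟨x, hx, hxJ⟩ := Set.exists_of_ssubset hJ
  obtain ⟨_, ⟨p₀, hp₀, rfl⟩, hmin⟩ := exists_mem_forall_reflTransGen
    ((hI.subset Set.sdiff_subset).image Sum.inl) ⟨_, ⟨x, ⟨hx, hxJ⟩, rfl⟩⟩ (arc Q)
  let S : Set V := {p | p ∈ I \ J ∧ Relation.ReflTransGen (arc Q) (.inl p₀) (.inl p)}
  have hS : ∀ p ∈ I \ (I \ S), p ∈ S := fun p hp => by_contra fun h => hp.2 ⟨hp.1, h⟩
  have hJS : J ⊆ I \ S := fun q hq => ⟨hJ.1 hq, fun hqS => hqS.1.2 hq⟩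
  refine ⟨I \ S, ⟨Set.sdiff_subset, fun h => (h hp₀.1).2 ⟨hp₀, .refl⟩⟩, ?_, ?_⟩
  · intro r hr hb hbr
    by_contra hhead
    obtain ⟨a, ha, haI⟩ := hmodel r hr hb
    have haS : a ∈ S := hS a ⟨haI, fun h => hhead ⟨a, ha, h⟩⟩
    obtain ⟨q, hq, hqJ⟩ := hred r hr hb (satBodyRed_of_not_reach hr ha hJS
      (fun p hp hpJ hap => hp.2 ⟨⟨hp.1, hpJ⟩, haS.2.trans hap⟩) hbr)
    exact hhead ⟨q, hq, hJS hqJ⟩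
  · intro p hp q hq
    have hmr := fun p (hp : p ∈ S) => (⟨hp.2, hmin _ ⟨p, hp.1, rfl⟩ hp.2⟩ :
      mreach Q (.inl p₀) (.inl p))
    exact ⟨(hmr p (hS p hp)).2.trans (hmr q (hS q hq)).1,
      (hmr q (hS q hq)).2.trans (hmr p (hS p hp)).1⟩

end Localization

section DependencyGraph

lemma mem_atomsProg_of_arc_inl {Q : Program V} {a : V} {v : Vtx V} (h : arc Q (.inl a) v) :
    a ∈ atomsProg Q := by
  rcases h with ⟨r, hr, ⟨a', ha', ha⟩, -⟩ | ⟨_, _, h, -⟩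
  · exact Sum.inl.inj ha' ▸ mem_atomsProg_of_mem_head hr ha
  · exact nomatch h

lemma mem_atomsProg_of_arc_to_inl {Q : Program V} {u : Vtx V} {x : V} (h : arc Q u (.inl x)) :
    x ∈ atomsProg Q := by
  rcases h with ⟨r, hr, -, ⟨b, hb, hbl⟩ | ⟨_, h, -⟩⟩ | ⟨B, p, -, hp, hB, hc⟩
  · exact Sum.inl.inj hb ▸ mem_atomsProg_of_mem_body hr hbl rfl
  · exact nomatch h
  · have hw : wt B p ≠ 0 := by rcases hc with ⟨-, h⟩ | ⟨-, h⟩; exacts [h.ne', h]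
    exact Sum.inl.inj hp ▸ atomsAgg_subset_atomsProg hB (mem_atomsAgg_of_wtL_ne_zero hw)

lemma mem_AgOf_of_arc_to_inr {Q : Program V} {u : Vtx V} {B : Agg V} (h : arc Q u (.inr B)) :
    B ∈ AgOf Q := by
  rcases h with ⟨r, hr, -, ⟨_, h, -⟩ | ⟨B', hB, hbl⟩⟩ | ⟨_, _, -, h, -⟩
  · exact nomatch h
  · exact Sum.inr.inj hB ▸ ⟨r, hr, hbl⟩
  · exact nomatch h

variable {aux : V} {pF : V → V} {P : Program V} {A : Agg V} {Vs : Set V}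

lemma arc_rewProg {u v : Vtx V} (h : arc (rewProg aux pF P A Vs) u v) :
    arc P u v ∨ (∃ a, u = .inl a ∧ v = .inl aux ∧ arc P (.inl a) (.inr A)) ∨
      (u = .inl aux ∧ ∃ B ∈ gtParts A, v = .inr (rewAgg pF Vs B)) ∨
      (∃ p, u = .inl (pF p) ∧ v = .inl aux) ∨
      (∃ B ∈ gtParts A, rewAgg pF Vs B ∉ AgOf P ∧ u = .inr (rewAgg pF Vs B) ∧
        ∃ x, v = .inl x ∧ 0 < wt (rewAgg pF Vs B) x) := by
  rcases h with ⟨ρ, hρ | ⟨r, hr, rfl⟩, ⟨a, rfl, ha⟩, htgt⟩ | ⟨A', x, rfl, rfl, hA', hc⟩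
  · obtain ⟨B, hB, rfl | ⟨p, -, -, rfl | rfl | rfl⟩⟩ := mem_posProg.1 hρ <;>
      simp only [List.mem_singleton, BLit.lit.injEq, BLit.agg.injEq, Lit.pos.injEq, reduceCtorEq,
        and_false, exists_false, false_or, or_false, exists_eq_right] at htgt
    · rw [Finset.mem_singleton.1 ha]
      exact Or.inr (Or.inr (Or.inl ⟨rfl, B, hB, htgt⟩))
    · rw [htgt, Finset.mem_singleton.1 ha]
      exact Or.inr (Or.inr (Or.inr (Or.inl ⟨p, rfl, rfl⟩)))
  · rcases htgt with ⟨b, rfl, hb⟩ | ⟨A'', rfl, hA''⟩ <;>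
      obtain ⟨bl, hbl, hbl'⟩ := List.mem_map.1 ‹_›
    · by_cases hbA : bl = .agg A
      · subst hbA
        rw [replB_self, BLit.lit.injEq, Lit.pos.injEq] at hbl'
        exact Or.inr (Or.inl ⟨a, rfl, hbl' ▸ rfl,
          Or.inl ⟨r, hr, ⟨a, rfl, ha⟩, Or.inr ⟨A, rfl, hbl⟩⟩⟩)
      · rw [replB_of_ne hbA] at hbl'
        exact Or.inl (Or.inl ⟨r, hr, ⟨a, rfl, ha⟩, Or.inl ⟨b, rfl, hbl' ▸ hbl⟩⟩)
    · by_cases hbA : bl = .agg A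
      · subst hbA
        simp [replB_self] at hbl'
      · rw [replB_of_ne hbA] at hbl'
        exact Or.inl (Or.inl ⟨r, hr, ⟨a, rfl, ha⟩, Or.inr ⟨A'', rfl, hbl' ▸ hbl⟩⟩)
  · by_cases hP : A' ∈ AgOf P
    · exact Or.inl (Or.inr ⟨A', x, rfl, rfl, hP, hc⟩)
    · obtain ⟨B, hB, rfl⟩ := (AgOf_rewProg hA').resolve_right fun h => hP h.1
      refine Or.inr (Or.inr (Or.inr (Or.inr ⟨B, hB, hP, rfl, x, rfl, ?_⟩)))
      rcases hc with ⟨-, h⟩ | ⟨h, -⟩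
      exacts [h, nomatch h]

lemma reach_rewProg_of_aux (hF : IsFresh aux pF P A) (hAP : A ∈ AgOf P) {v : Vtx V}
    (h : Relation.ReflTransGen (arc (rewProg aux pF P A Vs)) (.inl aux) v) :
    (v = .inl aux ∨ (∃ q, v = .inl (pF q)) ∨ ∃ B ∈ gtParts A, v = .inr (rewAgg pF Vs B)) ∨
      Relation.ReflTransGen (arc P) (.inr A) v := by
  have hrew : ∀ B ∈ gtParts A, ∀ x, 0 < wt (rewAgg pF Vs B) x →
      (.inl x = (.inl aux : Vtx V) ∨ (∃ q, (.inl x : Vtx V) = .inl (pF q)) ∨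
        ∃ B ∈ gtParts A, (.inl x : Vtx V) = .inr (rewAgg pF Vs B)) ∨
      Relation.ReflTransGen (arc P) (.inr A) (.inl x) := fun B hB x hx => by
    rcases wt_rewAgg_pos hx with hw | ⟨q, rfl⟩
    · exact Or.inr (.single (Or.inr ⟨A, x, rfl, rfl, hAP, arc_cond_of_mem_gtParts hB hw⟩))
    · exact Or.inl (Or.inr (Or.inl ⟨q, rfl⟩))
  induction h with
  | refl => exact Or.inl (Or.inl rfl)
  | tail _ harc ih =>
    rcases arc_rewProg harc with hP | ⟨a, -, rfl, -⟩ | ⟨-, B, hB, rfl⟩ | ⟨p, -, rfl⟩ |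
      ⟨B, hB, -, -, x, rfl, hx⟩
    · rcases ih with (rfl | ⟨q, rfl⟩ | ⟨B, hB, rfl⟩) | ih
      · exact absurd (mem_atomsProg_of_arc_inl hP) fun h => hF.aux_notMem (Or.inl h)
      · exact absurd (mem_atomsProg_of_arc_inl hP) fun h => hF.pF_notMem q (Or.inl h)
      · rcases hP with ⟨_, _, ⟨_, h, -⟩, -⟩ | ⟨_, x, he, rfl, -, ⟨-, hx⟩ | ⟨h, -⟩⟩
        · exact nomatch h
        · exact hrew B hB x (Sum.inr.inj he ▸ hx)
        · exact nomatch (Sum.inr.inj he ▸ h : (rewAgg pF Vs B).op = .ne)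
      · exact Or.inr (ih.tail hP)
    · exact Or.inl (Or.inl rfl)
    · exact Or.inl (Or.inr (Or.inr ⟨B, hB, rfl⟩))
    · exact Or.inl (Or.inl rfl)
    · exact hrew B hB x hx

lemma reach_rewProg_to_aux (hF : IsFresh aux pF P A) {u : Vtx V}
    (h : Relation.ReflTransGen (arc (rewProg aux pF P A Vs)) u (.inl aux)) :
    (u = .inl aux ∨ (∃ q, u = .inl (pF q)) ∨
      ∃ B ∈ gtParts A, rewAgg pF Vs B ∉ AgOf P ∧ u = .inr (rewAgg pF Vs B)) ∨
      Relation.ReflTransGen (arc P) u (.inr A) := by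
  induction h using Relation.ReflTransGen.head_induction_on with
  | refl => exact Or.inl (Or.inl rfl)
  | head harc _ ih =>
    rcases arc_rewProg harc with hP | ⟨a, rfl, rfl, ha⟩ | ⟨rfl, -⟩ | ⟨p, rfl, -⟩ |
      ⟨B, hB, hBP, rfl, -⟩
    · rcases ih with (rfl | ⟨q, rfl⟩ | ⟨B, -, hBP, rfl⟩) | ih
      · exact absurd (mem_atomsProg_of_arc_to_inl hP) fun h => hF.aux_notMem (Or.inl h)
      · exact absurd (mem_atomsProg_of_arc_to_inl hP) fun h => hF.pF_notMem q (Or.inl h)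
      · exact absurd (mem_AgOf_of_arc_to_inr hP) hBP
      · exact Or.inr (ih.head hP)
    · exact Or.inr (.single ha)
    · exact Or.inl (Or.inl rfl)
    · exact Or.inl (Or.inr (Or.inl ⟨p, rfl⟩))
    · exact Or.inl (Or.inr (Or.inr ⟨B, hB, hBP, rfl⟩))

lemma mem_recSet_of_mreach_rewProg (hF : IsFresh aux pF P A) (hAP : A ∈ AgOf P) {p : V}
    (hp : p ∈ atomsProg P) (h : mreach (rewProg aux pF P A Vs) (.inl aux) (.inl p)) :
    p ∈ recSet P A := by
  have hpaux : p ≠ aux := fun h => hF.aux_notMem (Or.inl (h ▸ hp))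
  have hppF : ∀ q, p ≠ pF q := fun q h => hF.pF_notMem q (Or.inl (h ▸ hp))
  refine ⟨hAP, ?_, ?_⟩
  · rcases reach_rewProg_of_aux hF hAP h.1 with (h | ⟨q, h⟩ | ⟨_, -, h⟩) | h
    · exact absurd (Sum.inl.inj h) hpaux
    · exact absurd (Sum.inl.inj h) (hppF q)
    · exact nomatch h
    · exact h
  · rcases reach_rewProg_to_aux hF h.2 with (h | ⟨q, h⟩ | ⟨_, -, -, h⟩) | h
    · exact absurd (Sum.inl.inj h) hpaux
    · exact absurd (Sum.inl.inj h) (hppF q)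
    · exact nomatch h
    · exact h

end DependencyGraph

section StableOriginal

variable {aux : V} {pF : V → V} {P : Program V} {A : Agg V} {Vs : Set V}

lemma aux_mem_of_satRedProg_extSet (hF : IsFresh aux pF P A) {I J' : Set V}
    (hI : I ⊆ oldAtoms P A) (hs : satAgg I A) (hJ' : J' ⊆ extSet aux pF Vs A I I)
    (hred : satRedProg (extSet aux pF Vs A I I) J' (rewProg aux pF P A Vs))
    (hVs : ∀ p ∈ I, p ∉ J' → p ∈ Vs) (hsr : satAggRed I (J' \ newAtoms aux pF Vs A) A) :
    aux ∈ J' := by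
  obtain ⟨B, hB, hlt⟩ := (satAggWith_iff_exists_gtParts A _).1 hsr
  have hold := fun q (hq : q ∈ oldAtoms P A) =>
    (mem_extSet_of_mem_oldAtoms (Vs := Vs) (J := I) (I := I) hF hq).symm
  have hE : ∀ q ∈ atomsAgg B, q ∈ I ↔ q ∈ extSet aux pF Vs A I I :=
    fun q hq => hold q (Or.inr (atomsAgg_of_mem_gtParts hB ▸ hq))
  have hAtF : ∀ p ∈ Vs, wtL B (.pos p) < 0 → p ∈ AtF aux pF Vs A :=
    fun p hp hw => (mem_AtF hF.injective).2 ⟨B, hB, hp, hw⟩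
  have hauxE : aux ∈ extSet aux pF Vs A I I :=
    (aux_mem_extSet_iff hF hI).2 ⟨hs, (satAggRed_self I A).2 hs⟩
  have hdiff : ∀ p ∈ atomsAgg A, p ∈ J' → p ∈ J' \ newAtoms aux pF Vs A :=
    fun p hp h => ⟨h, hF.notMem_newAtoms (Or.inr hp)⟩
  have hnVs : ∀ p ∉ Vs, wtL B (.pos p) < 0 → p ∈ I → p ∈ J' \ newAtoms aux pF Vs A :=
    fun p hp _ hpI => ⟨by_contra fun h => hp (hVs p hpI h), hF.notMem_newAtoms (hI hpI)⟩
  refine aux_mem_of_satRedProg hred hB ((satAggRed_self _ _).1 ?_) ?_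
  · refine satAggRed_rewAgg_of_lt hE (fun q _ h => hJ' h.1) (fun p hp hw hpF => ?_) hnVs hlt
    exact absurd ((pF_mem_extSet_iff hF hI).2
      ⟨hAtF p hp hw, fun _ => Or.inl ((satAggRed_self I A).2 hs), fun h => absurd hs h⟩) hpF
  · refine satAggRed_rewAgg_of_lt hE (fun q _ h => h.1) (fun p hp hw hpF => ?_) hnVs hlt
    exact hdiff p (AtF_subset_atomsAgg hF.injective (hAtF p hp hw))
      ((mem_or_pF_mem_of_satRedProg hF.injective hred (hAtF p hp hw) hauxE).resolve_right hpF)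

lemma diff_newAtoms_ssubset (hF : IsFresh aux pF P A) {I J' : Set V} (hI : I ⊆ oldAtoms P A)
    (hJ' : J' ⊂ extSet aux pF Vs A I I)
    (hred : satRedProg (extSet aux pF Vs A I I) J' (rewProg aux pF P A Vs)) :
    J' \ newAtoms aux pF Vs A ⊂ I := by
  have hsub : J' \ newAtoms aux pF Vs A ⊆ I := fun q hq =>
    (extSet_subset_union I I (hJ'.1 hq.1)).resolve_right hq.2
  refine hsub.ssubset_of_ne fun heq => hJ'.2 ?_
  have hIJ : I ⊆ J' := fun q hq => (heq ▸ hq : q ∈ J' \ _).1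
  have haux : satAgg I A → aux ∈ J' := fun hs =>
    aux_mem_of_satRedProg_extSet hF hI hs hJ'.1 hred (fun p hp h => absurd (hIJ hp) h)
      (heq ▸ (satAggRed_self I A).2 hs)
  refine extSet_subset_of hF hI hIJ (fun hs _ => haux hs) fun p hp _ h2 => ?_
  by_cases hs : satAgg I A
  · exact pF_mem_of_satRedProg_of_aux_mem hred hp
      ((aux_mem_extSet_iff hF hI).2 ⟨hs, (satAggRed_self I A).2 hs⟩) (haux hs)
  · exact pF_mem_of_satRedProg_of_notMem hF.injective hred hp fun h =>
      h2 hs ((mem_extSet_of_mem_oldAtoms hF (Or.inr (AtF_subset_atomsAgg hF.injective hp))).1 h)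

/-- If `aux ∉ J'`, the atoms of `I` lost in `J'` lie in the component of `aux`, hence in
`rec(Π,A) ⊆ V`; so no literal of `A` that is replaced by a negation loses support, and the failure
of rule (4) in `J'` transfers to `A`. -/
lemma not_satRedProg_rewProg_extSet (hF : IsFresh aux pF P A) (hrec : recSet P A ⊆ Vs)
    {I J' : Set V} (hI : stable P I) (hJ' : J' ⊂ extSet aux pF Vs A I I)
    (hmr : ∀ p ∈ extSet aux pF Vs A I I \ J', ∀ q ∈ extSet aux pF Vs A I I \ J',
      mreach (rewProg aux pF P A Vs) (.inl p) (.inl q)) :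
    ¬ satRedProg (extSet aux pF Vs A I I) J' (rewProg aux pF P A Vs) := by
  intro hred
  have hIP := stable_subset_atomsProg hI
  have hI' : I ⊆ oldAtoms P A := fun q hq => Or.inl (hIP hq)
  have hE := fun q (hq : q ∈ atomsProg P) =>
    (mem_extSet_of_mem_oldAtoms (Vs := Vs) (J := I) (I := I) hF (Or.inl hq)).symm
  refine hI.2 _ (diff_newAtoms_ssubset hF hI' hJ' hred) (satRedProg_of_image_replRule
    (satRedProg_union.1 hred).2 hE (fun q hq => ⟨fun h => h.1,
      fun h => ⟨h, hF.notMem_newAtoms (Or.inl hq)⟩⟩)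
    (fun hs => (aux_mem_extSet_iff hF hI').2 ⟨hs, (satAggRed_self I A).2 hs⟩) ?_)
  intro hAP hs hsr
  by_contra haux
  have hauxE : aux ∈ extSet aux pF Vs A I I :=
    (aux_mem_extSet_iff hF hI').2 ⟨hs, (satAggRed_self I A).2 hs⟩
  refine haux (aux_mem_of_satRedProg_extSet hF hI' hs hJ'.1 hred (fun p hp hpJ => ?_) hsr)
  exact hrec (mem_recSet_of_mreach_rewProg hF hAP (hIP hp)
    (hmr aux ⟨hauxE, haux⟩ p ⟨(mem_extSet_of_mem_oldAtoms hF (hI' hp)).2 hp, hpJ⟩))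

lemma stable_rewProg_extSet (hfin : P.Finite) (hF : IsFresh aux pF P A)
    (hrec : recSet P A ⊆ Vs) {I : Set V} (hI : stable P I) :
    stable (rewProg aux pF P A Vs) (extSet aux pF Vs A I I) := by
  have hIP := stable_subset_atomsProg hI
  have hI' : I ⊆ oldAtoms P A := fun q hq => Or.inl (hIP hq)
  have hmodel := satRedProg_self_iff.1
    (satRedProg_rewProg_extSet (Vs := Vs) hF hI' subset_rfl (satRedProg_self_iff.2 hI.1))
  refine ⟨hmodel, fun J' hJ' hred => ?_⟩
  have hfinE : (extSet aux pF Vs A I I).Finite :=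
    (((atomsProg_finite hfin).subset hIP).union ((Set.finite_singleton aux).union
      (((atomsAgg_finite A).subset (AtF_subset_atomsAgg hF.injective)).image pF))).subset
      (extSet_subset_union I I)
  obtain ⟨J₂, hJ₂, hred₂, hmr⟩ := exists_satRedProg_mreach hfinE hmodel hJ' hred
  exact not_satRedProg_rewProg_extSet hF hrec hI hJ₂ hmr hred₂

end StableOriginal

/-- Faithfulness of the aggregate rewriting (Theorem 1):
    for a program `Π`, an aggregate `A` (with `⊙ ∈ {>,≠}`) and a set of atoms
    `V ⊇ rec(Π,A)`, with `aux` and the `p^F` fresh pairwise-distinct atoms,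
    `Π ≡_{At(Π)} rew(Π,A,V)`: each stable model `I` of `Π` corresponds to the
    unique stable model `ext(I,I)` of `rew(Π,A,V)`; the two programs have
    equally many stable models, and the restrictions of their stable models
    to `At(Π)` coincide. -/
theorem rewriting_faithful (aux : V) (pF : V → V) (P : Program V) (A : Agg V)
    (Vs : Set V) (hfin : P.Finite)
    (hauxP : aux ∉ atomsProg P) (hauxA : aux ∉ atomsAgg A)
    (hpFP : ∀ p, pF p ∉ atomsProg P) (hpFA : ∀ p, pF p ∉ atomsAgg A)
    (hpFaux : ∀ p, pF p ≠ aux) (hpFinj : Function.Injective pF)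
    (hrec : recSet P A ⊆ Vs) :
    (∀ I : Set V, stable P I →
        stable (rewProg aux pF P A Vs) (extSet aux pF Vs A I I) ∧
        ∀ I' : Set V, stable (rewProg aux pF P A Vs) I' →
          I' \ ({aux} ∪ pF '' AtF aux pF Vs A) = I →
          I' = extSet aux pF Vs A I I) ∧
    (∀ I' : Set V, stable (rewProg aux pF P A Vs) I' →
        stable P (I' \ ({aux} ∪ pF '' AtF aux pF Vs A))) ∧
    Nonempty ({I : Set V // stable P I} ≃
              {I' : Set V // stable (rewProg aux pF P A Vs) I'}) ∧
    {S : Set V | ∃ I, stable P I ∧ S = I ∩ atomsProg P} =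
      {S : Set V | ∃ I', stable (rewProg aux pF P A Vs) I' ∧
        S = I' ∩ atomsProg P} := by
  have hF : IsFresh aux pF P A :=
    ⟨fun h => h.elim hauxP hauxA, fun p h => h.elim (hpFP p) (hpFA p), hpFaux, hpFinj⟩
  have hPR := fun I (hI : stable P I) => stable_rewProg_extSet (Vs := Vs) hfin hF hrec hI
  have hext := fun I' (hI' : stable (rewProg aux pF P A Vs) I') =>
    eq_extSet_of_stable_rewProg hF hI'
  have hRP := fun I' (hI' : stable (rewProg aux pF P A Vs) I') =>
    stable_of_stable_rewProg_extSet hF (diff_newAtoms_subset_oldAtoms hpFinj hI')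
      (hext I' hI' ▸ hI')
  have hback := fun I (hI : stable P I) =>
    extSet_diff_newAtoms (Vs := Vs) (I := I) hF fun _ hq => Or.inl (stable_subset_atomsProg hI hq)
  refine ⟨fun I hI => ⟨hPR I hI, fun I' hI' heq => heq ▸ hext I' hI'⟩, hRP,
    ⟨⟨fun I => ⟨_, hPR I.1 I.2⟩, fun I' => ⟨_, hRP I'.1 I'.2⟩,
      fun I => Subtype.ext (hback I.1 I.2), fun I' => Subtype.ext (hext I'.1 I'.2).symm⟩⟩, ?_⟩
  ext S
  constructor
  · rintro ⟨I, hI, rfl⟩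
    exact ⟨_, hPR I hI, (extSet_inter_atomsProg hF I I).symm⟩
  · rintro ⟨I', hI', rfl⟩
    have h := extSet_inter_atomsProg (Vs := Vs) hF (I' \ newAtoms aux pF Vs A)
      (I' \ newAtoms aux pF Vs A)
    rw [← hext I' hI'] at h
    exact ⟨_, hRP I' hI', h⟩
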